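/- For a set S of non-pointed matrices (S ⊆ matr), the following are equivalent: (i) every finitely complete category with S-closed relations is a preorder; (ii) the category of Boolean algebras does not have S-closed relations. -/

import Mathlib

/-!
Call two rows `i₀, i₁` of `M` with two `0/1`-assignments `a, a'` of the variables a *conflict*
when `a` on row `i₀` and `a'` on row `i₁` agree on every left column while the right entries get
`1` and `0`. A conflict makes every finitely complete category with `M`-closed relations a
preorder: interpret each variable `t` by the pair `(a t, a' t)` read in `{u, v}`, as a morphism
into `Y × Y`, and test the relation on `(Y × Y)ⁿ` equating the first coordinate in row `i₀` with
the second coordinate in row `i₁`; the left columns lie in it, so the right column does, i.e.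
`u = v`. This applies to `BoolAlg` as well, which is not a preorder.

Without a conflict, some Boolean function `φ` satisfies the rows of `M` over `{0, 1}`. The
disjunctive normal form of `φ` is a Boolean term satisfying the same identities in every Boolean
algebra, since both sides meet each minterm in the same way; applying it to the factorizations of
the left columns factors the right column, so `BoolAlg` has `M`-closed relations. The same
function, evaluated pointwise, shows that the dual of the category of finite sets, which is
finitely complete but not a preorder, has `M`-closed relations.
-/

open CategoryTheory CategoryTheory.Limits

universe w v u

/-- A (non-pointed) extended matrix `M ∈ matr(n,m,k)`: `n > 0` rows, `m` left
columns and one right column, with entries in `{x₁, …, x_k}` (modelled as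
`Fin k`). `matr` is the union over all `n,m,k`, i.e. the type `Matr`. -/
structure Matr where
  n : ℕ
  m : ℕ
  k : ℕ
  npos : 0 < n
  left : Fin n → Fin m → Fin k
  right : Fin n → Fin k

namespace Matr

variable {C : Type u} [Category.{v} C]

/-- A relation `r : R ⟶ P`, where `pr` exhibits `P` as the `n`-fold product
`Xⁿ`, is `M`-closed: for every object `Z` and every interpretation
`f : {x₁,…,x_k} → C(Z,X)` of the entries of `M`, if for every left column `j`
the induced morphism `Z ⟶ Xⁿ` factors through `r`, then so does the morphism
induced by the right column. -/
def IsClosed (M : Matr) {X P R : C} (pr : Fin M.n → (P ⟶ X))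
    (hP : IsLimit (Fan.mk P pr)) (r : R ⟶ P) : Prop :=
  ∀ (Z : C) (f : Fin M.k → (Z ⟶ X)),
    (∀ j : Fin M.m, ∃ g : Z ⟶ R,
        g ≫ r = hP.lift (Fan.mk Z (fun i => f (M.left i j)))) →
    ∃ g : Z ⟶ R, g ≫ r = hP.lift (Fan.mk Z (fun i => f (M.right i)))

/-- A relation `r : R ⟶ P`, where `pr` exhibits `P` as the product
`X₁ × ⋯ × X_n` of a family `X : Fin n → C`, is strictly `M`-closed: for every
object `Z` and every row-wise interpretation `fᵢ : {x₁,…,x_k} → C(Z,Xᵢ)`, if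
every left column's induced morphism `Z ⟶ X₁ × ⋯ × X_n` factors through `r`,
then so does the right column's induced morphism. -/
def IsStrictClosed (M : Matr) {X : Fin M.n → C} {P R : C}
    (pr : ∀ i, P ⟶ X i) (hP : IsLimit (Fan.mk P pr)) (r : R ⟶ P) : Prop :=
  ∀ (Z : C) (f : ∀ i, Fin M.k → (Z ⟶ X i)),
    (∀ j : Fin M.m, ∃ g : Z ⟶ R,
        g ≫ r = hP.lift (Fan.mk Z (fun i => f i (M.left i j)))) →
    ∃ g : Z ⟶ R, g ≫ r = hP.lift (Fan.mk Z (fun i => f i (M.right i)))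

/-- `C` has `M`-closed `W`-relations: every `n`-ary relation `r : R ⟶ Xⁿ`
belonging to the class of monomorphisms `W` is `M`-closed. -/
def HasClosedRels (M : Matr) (C : Type u) [Category.{v} C]
    (W : MorphismProperty C) : Prop :=
  ∀ (X P R : C) (pr : Fin M.n → (P ⟶ X)) (hP : IsLimit (Fan.mk P pr))
    (r : R ⟶ P), W r → M.IsClosed pr hP r

/-- `C` has `S`-closed `W`-relations. -/
def HasSClosedRels (S : Set Matr) (C : Type u) [Category.{v} C]
    (W : MorphismProperty C) : Prop :=
  ∀ M ∈ S, HasClosedRels M C W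

end Matr

/-- The class of strong monomorphisms of `C`, as a `MorphismProperty`. -/
def strongMonos (C : Type u) [Category.{v} C] : MorphismProperty C :=
  fun _ _ f => StrongMono f
section DNF

open Finset

variable {α β : Type*} [BooleanAlgebra α] [BooleanAlgebra β]
variable {ι κ : Type*} [Fintype ι] [Fintype κ]

def minterm (x : ι → α) (b : ι → Bool) : α :=
  univ.inf fun t => cond (b t) (x t) (x t)ᶜ

variable {x : ι → α} {b : ι → Bool}

lemma minterm_le (x : ι → α) (b : ι → Bool) (t : ι) : minterm x b ≤ cond (b t) (x t) (x t)ᶜ :=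
  inf_le (mem_univ t)

lemma minterm_le_minterm_comp (L : κ → ι) : minterm x b ≤ minterm (x ∘ L) (b ∘ L) :=
  Finset.le_inf fun j _ => minterm_le x b (L j)

lemma disjoint_minterm {b' : ι → Bool} (h : b ≠ b') : Disjoint (minterm x b) (minterm x b') := by
  obtain ⟨t, ht⟩ := Function.ne_iff.mp h
  refine (Disjoint.mono (minterm_le x b t) (minterm_le x b' t)) ?_
  cases hb : b t <;> cases hb' : b' t <;> simp_all [disjoint_compl_left, disjoint_compl_right]

variable [DecidableEq ι] [DecidableEq κ]

def dnf (p : (ι → Bool) → Bool) (x : ι → α) : α :=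
  univ.sup fun b => cond (p b) (minterm x b) ⊥

variable {p : (ι → Bool) → Bool}

lemma sup_minterm (x : ι → α) : univ.sup (minterm x) = ⊤ := by
  refine top_le_iff.mp ?_
  calc ⊤ = univ.inf fun t => (univ : Finset Bool).sup fun c => cond c (x t) (x t)ᶜ := by
        simp [Fintype.univ_bool]
    _ = _ := inf_sup _ _ _
    _ ≤ univ.sup (minterm x) := Finset.sup_le fun g _ =>
        le_sup_of_le (mem_univ fun t => g t (mem_univ t))
          (inf_attach univ fun t => cond (g t (mem_univ t)) (x t) (x t)ᶜ).le

lemma minterm_le_dnf (h : p b = true) : minterm x b ≤ dnf p x :=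
  le_sup_of_le (mem_univ b) (by rw [h]; rfl)

lemma disjoint_minterm_dnf (h : p b = false) : Disjoint (minterm x b) (dnf p x) := by
  refine Finset.disjoint_sup_right.mpr fun b' _ => ?_
  cases hb' : p b'
  · exact disjoint_bot_right
  · exact disjoint_minterm (by rintro rfl; simp_all)

lemma eq_dnf_of_forall_minterm {a : α} (hle : ∀ b, p b = true → minterm x b ≤ a)
    (hdis : ∀ b, p b = false → Disjoint (minterm x b) a) : a = dnf p x := by
  calc a = a ⊓ univ.sup (minterm x) := by rw [sup_minterm, inf_top_eq]
    _ = univ.sup fun b => a ⊓ minterm x b := sup_inf_distrib_left _ _ _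
    _ = dnf p x := sup_congr rfl fun b _ => by
        cases hb : p b
        · exact (hdis b hb).symm.eq_bot
        · exact inf_eq_right.mpr (hle b hb)

lemma dnf_comp (p : (κ → Bool) → Bool) (x : ι → α) (L : κ → ι) :
    dnf p (x ∘ L) = dnf (fun b => p (b ∘ L)) x :=
  eq_dnf_of_forall_minterm (fun _ hb => (minterm_le_minterm_comp L).trans (minterm_le_dnf hb))
    fun _ hb => (disjoint_minterm_dnf hb).mono_left (minterm_le_minterm_comp L)

lemma dnf_eval (x : ι → α) (t : ι) : dnf (fun b => b t) x = x t := by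
  refine (eq_dnf_of_forall_minterm (fun b hb => ?_) fun b hb => ?_).symm
  · simpa [hb] using minterm_le x b t
  · simpa [hb, ← le_compl_iff_disjoint_right] using minterm_le x b t

lemma map_dnf (f : BoundedLatticeHom α β) (p : (ι → Bool) → Bool) (x : ι → α) :
    f (dnf p x) = dnf p (f ∘ x) := by
  rw [dnf, map_finset_sup]
  refine sup_congr rfl fun b _ => ?_
  simp only [Function.comp_apply]
  cases p b
  · exact map_bot f
  · rw [cond_true, cond_true, minterm, map_finset_inf]
    exact inf_congr rfl fun t _ => by cases hbt : b t <;> simp [hbt]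

/-- `(ι → Bool) → Bool` is the free Boolean algebra on `ι`, and `dnfHom x` is the morphism it
induces from `x`. -/
def dnfHom (x : ι → α) : BoundedLatticeHom ((ι → Bool) → Bool) α where
  toFun p := dnf p x
  map_sup' p q := by
    simp only [dnf, ← sup_sup]
    exact sup_congr rfl fun b _ => by cases hp : p b <;> cases hq : q b <;> simp [hp, hq]
  map_inf' p q := by
    refine (eq_dnf_of_forall_minterm (fun b hb => ?_) fun b hb => ?_).symm
    · have hpq : p b = true ∧ q b = true := by simpa using hb
      exact le_inf (minterm_le_dnf hpq.1) (minterm_le_dnf hpq.2)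
    · cases hp : p b
      · exact (disjoint_minterm_dnf hp).mono_right inf_le_left
      cases hq : q b
      · exact (disjoint_minterm_dnf hq).mono_right inf_le_right
      simp_all
  map_top' := (eq_dnf_of_forall_minterm (fun _ _ => le_top) fun _ h => absurd h (by simp)).symm
  map_bot' := (eq_dnf_of_forall_minterm (fun _ h => absurd h (by simp)) fun _ _ => disjoint_bot_right).symm

end DNF

theorem CategoryTheory.Limits.IsLimit.fan_mk_lift_comp {C : Type u} [Category.{v} C] {β : Type*}
    {F : β → C} {P Z : C} {pr : ∀ i, P ⟶ F i} (hP : IsLimit (Fan.mk P pr)) (c : ∀ i, Z ⟶ F i)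
    (i : β) : hP.lift (Fan.mk Z c) ≫ pr i = c i :=
  hP.fac _ ⟨i⟩

namespace Matr

def IsRealizedBy (M : Matr) (φ : (Fin M.m → Bool) → Bool) : Prop :=
  ∀ i (b : Fin M.k → Bool), φ (b ∘ M.left i) = b (M.right i)

def HasConflict (M : Matr) : Prop :=
  ∃ (i₀ i₁ : Fin M.n) (a a' : Fin M.k → Bool),
    a ∘ M.left i₀ = a' ∘ M.left i₁ ∧ a (M.right i₀) = true ∧ a' (M.right i₁) = false

theorem exists_isRealizedBy_of_not_hasConflict {M : Matr} (hM : ¬ M.HasConflict) :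
    ∃ φ, M.IsRealizedBy φ := by
  classical
  refine ⟨fun v => decide (∃ i, ∃ a : Fin M.k → Bool, a ∘ M.left i = v ∧ a (M.right i) = true),
    fun i b => ?_⟩
  cases hb : b (M.right i)
  · simp only [decide_eq_false_iff_not]
    rintro ⟨i', a, ha, ha'⟩
    exact hM ⟨i', i, a, b, ha, ha', hb⟩
  · exact decide_eq_true ⟨i, b, rfl, hb⟩

theorem IsRealizedBy.dnf_comp_left {M : Matr} {φ : (Fin M.m → Bool) → Bool}
    (hφ : M.IsRealizedBy φ) {α : Type*} [BooleanAlgebra α] (x : Fin M.k → α) (i : Fin M.n) :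
    dnf φ (x ∘ M.left i) = x (M.right i) := by
  rw [dnf_comp, ← dnf_eval x (M.right i)]
  exact congrArg (dnf · x) (funext (hφ i))

section

variable {C : Type u} [Category.{v} C]

theorem IsClosed.eq_of_conflict {M : Matr} {X P R Y Z : C} {pr : Fin M.n → (P ⟶ X)}
    {hP : IsLimit (Fan.mk P pr)} {r : R ⟶ P} (hr : M.IsClosed pr hP r)
    {i₀ i₁ : Fin M.n} {a a' : Fin M.k → Bool} (hleft : a ∘ M.left i₀ = a' ∘ M.left i₁)
    (hright₀ : a (M.right i₀) = true) (hright₁ : a' (M.right i₁) = false) (e₀ e₁ : X ⟶ Y)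
    (hr_eq : ∀ g : Z ⟶ P, (∃ h, h ≫ r = g) ↔ g ≫ pr i₀ ≫ e₀ = g ≫ pr i₁ ≫ e₁)
    {u v : Z ⟶ Y} (f : Fin M.k → (Z ⟶ X))
    (hf₀ : ∀ t, f t ≫ e₀ = cond (a t) u v) (hf₁ : ∀ t, f t ≫ e₁ = cond (a' t) u v) :
    u = v := by
  have factors_iff (c : Fin M.n → Fin M.k) :
      (∃ h, h ≫ r = hP.lift (Fan.mk Z fun i => f (c i))) ↔
        cond (a (c i₀)) u v = cond (a' (c i₁)) u v := by
    refine (hr_eq _).trans ?_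
    simp only [← Category.assoc, hP.fan_mk_lift_comp, hf₀, hf₁]
  obtain ⟨h, hh⟩ := hr Z f fun j => (factors_iff (M.left · j)).2 <| by
    rw [show a (M.left i₀ j) = a' (M.left i₁ j) from congrFun hleft j]
  simpa [hright₀, hright₁] using (factors_iff M.right).1 ⟨h, hh⟩

theorem subsingleton_hom_of_hasConflict [HasFiniteLimits C] {M : Matr} (hM : M.HasConflict)
    (h : M.HasClosedRels C (MorphismProperty.monomorphisms C)) (Z Y : C) :
    Subsingleton (Z ⟶ Y) := by
  obtain ⟨i₀, i₁, a, a', hleft, hright₀, hright₁⟩ := hM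
  refine ⟨fun u v => ?_⟩
  let pr := Pi.π fun _ : Fin M.n => Y ⨯ Y
  let r := equalizer.ι (pr i₀ ≫ prod.fst) (pr i₁ ≫ prod.snd)
  refine (h _ _ _ pr (productIsProduct _) r (MorphismProperty.monomorphisms.infer_property r)
    ).eq_of_conflict hleft hright₀ hright₁ prod.fst prod.snd (fun g => ⟨?_, fun hg => ?_⟩)
    (fun t => prod.lift (cond (a t) u v) (cond (a' t) u v)) (fun _ => prod.lift_fst _ _)
    fun _ => prod.lift_snd _ _
  · rintro ⟨h, rfl⟩
    rw [Category.assoc, Category.assoc, equalizer.condition]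
  · exact ⟨equalizer.lift g (by simpa only [Category.assoc] using hg), equalizer.lift_ι _ _⟩

end

end Matr

def BooleanSubalgebra.eqLocus {α β : Type*} [BooleanAlgebra α] [BooleanAlgebra β]
    (f g : BoundedLatticeHom α β) : BooleanSubalgebra α where
  carrier := {a | f a = g a}
  supClosed' a ha b hb := by simp_all
  infClosed' a ha b hb := by simp_all
  compl_mem' ha := by simp_all
  bot_mem' := by simp

namespace BoolAlg

variable {A B P R Z : BoolAlg.{w}}

abbrev freeOne : BoolAlg.{w} := of ((PUnit.{w + 1} → Bool) → Bool)

def homOfElem (a : A) : freeOne ⟶ A := ofHom (dnfHom fun _ => a)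

lemma homOfElem_comp (a : A) (f : A ⟶ B) : homOfElem a ≫ f = homOfElem (f a) :=
  ext fun p => map_dnf f.hom p _

lemma homOfElem_apply_generator (a : A) : homOfElem a (fun b => b PUnit.unit) = a :=
  dnf_eval (fun _ : PUnit.{w + 1} => a) PUnit.unit

lemma homOfElem_injective : Function.Injective (homOfElem : A → (freeOne ⟶ A)) :=
  fun a a' h => by rw [← homOfElem_apply_generator a, h, homOfElem_apply_generator]

lemma injective_of_mono (r : R ⟶ P) [Mono r] : Function.Injective r := fun a a' h =>
  homOfElem_injective ((cancel_mono r).mp (by rw [homOfElem_comp, homOfElem_comp, h]))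

lemma ext_of_isLimit {ι : Type*} {X : ι → BoolAlg.{w}} {pr : ∀ i, P ⟶ X i}
    (hP : IsLimit (Fan.mk P pr)) {p q : P} (h : ∀ i, pr i p = pr i q) : p = q :=
  homOfElem_injective <| Fan.IsLimit.hom_ext hP _ _ fun i => by
    change homOfElem p ≫ pr i = homOfElem q ≫ pr i
    rw [homOfElem_comp, homOfElem_comp, h]

lemma exists_comp_eq_of_injective (r : R ⟶ P) (hr : Function.Injective r) (ψ : Z ⟶ P)
    (h : ∀ z, ∃ y, r y = ψ z) : ∃ g : Z ⟶ R, g ≫ r = ψ := by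
  choose G hG using h
  refine ⟨ofHom
    { toFun := G
      map_sup' := fun a b => hr (by simp only [map_sup, hG])
      map_inf' := fun a b => hr (by simp only [map_inf, hG])
      map_top' := hr (by simp only [map_top, hG])
      map_bot' := hr (by simp only [map_bot, hG]) }, ext hG⟩

lemma exists_comp_eqLocus_iff (f g : A ⟶ B) (k : Z ⟶ A) :
    (∃ h : Z ⟶ of (BooleanSubalgebra.eqLocus f.hom g.hom),
      h ≫ ofHom (BooleanSubalgebra.eqLocus f.hom g.hom).subtype = k) ↔ k ≫ f = k ≫ g := by
  constructor
  · rintro ⟨h, rfl⟩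
    exact ext fun z => (h z).2
  · intro hk
    exact exists_comp_eq_of_injective _ Subtype.val_injective k
      fun z => ⟨⟨k z, ConcreteCategory.congr_hom hk z⟩, rfl⟩

def piProj {ι : Type} (X : ι → BoolAlg.{w}) (i : ι) : of (∀ i, X i) ⟶ X i :=
  ofHom { Pi.evalLatticeHom i with map_top' := rfl, map_bot' := rfl }

def isLimitPi {ι : Type} (X : ι → BoolAlg.{w}) : IsLimit (Fan.mk (of (∀ i, X i)) (piProj X)) :=
  Fan.IsLimit.mk _
    (fun s => ofHom
      { toFun := fun z i => s.proj i z
        map_sup' := fun _ _ => funext fun i => map_sup (s.proj i).hom _ _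
        map_inf' := fun _ _ => funext fun i => map_inf (s.proj i).hom _ _
        map_top' := funext fun i => map_top (s.proj i).hom
        map_bot' := funext fun i => map_bot (s.proj i).hom })
    (fun _ _ => rfl) fun _ _ hm => ext fun z => funext fun i => congrArg (· z) (hm i)

theorem not_hasClosedRels_of_hasConflict {M : Matr} (hM : M.HasConflict) :
    ¬ M.HasClosedRels BoolAlg.{w} (MorphismProperty.monomorphisms _) := by
  obtain ⟨i₀, i₁, a, a', hleft, hright₀, hright₁⟩ := hM
  intro h
  let X : Bool → BoolAlg.{w} := fun _ => freeOne
  let pr := piProj fun _ : Fin M.n => of (∀ c, X c)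
  let L := BooleanSubalgebra.eqLocus (pr i₀ ≫ piProj X true).hom (pr i₁ ≫ piProj X false).hom
  have hmono : Mono (ofHom L.subtype) :=
    ConcreteCategory.mono_of_injective _ Subtype.val_injective
  have hr_eq (k : of (∀ c, X c) ⟶ of (Fin M.n → ∀ c, X c)) :
      (∃ g, g ≫ ofHom L.subtype = k) ↔
        k ≫ pr i₀ ≫ piProj X true = k ≫ pr i₁ ≫ piProj X false := by
    simpa only [Category.assoc] using
      exists_comp_eqLocus_iff (pr i₀ ≫ piProj X true) (pr i₁ ≫ piProj X false) k
  have htrue_eq_false := (h _ _ _ pr (isLimitPi _) _ hmono).eq_of_conflict hleft hright₀ hright₁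
    (piProj X true) (piProj X false) hr_eq (u := piProj X true) (v := piProj X false)
    (fun t => (isLimitPi X).lift (Fan.mk _ fun c => piProj X (cond c (a t) (a' t))))
    (fun t => by rw [(isLimitPi X).fan_mk_lift_comp]; cases a t <;> rfl)
    (fun t => by rw [(isLimitPi X).fan_mk_lift_comp]; cases a' t <;> rfl)
  exact top_ne_bot (congrArg (· fun c => cond c ⊤ ⊥) htrue_eq_false : (⊤ : freeOne.{w}) = ⊥)

theorem hasClosedRels_of_isRealizedBy {M : Matr} {φ : (Fin M.m → Bool) → Bool}
    (hφ : M.IsRealizedBy φ) : M.HasClosedRels BoolAlg.{w} (MorphismProperty.monomorphisms _) := by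
  intro X P R pr hP r (_ : Mono r) Z f hleft
  choose g hg using hleft
  refine exists_comp_eq_of_injective r (injective_of_mono r) _ fun z =>
    ⟨dnf φ fun j => g j z, ext_of_isLimit hP fun i => ?_⟩
  have hcol (j : Fin M.m) : pr i (r (g j z)) = f (M.left i j) z := by
    rw [← ConcreteCategory.comp_apply, ← ConcreteCategory.comp_apply, ← Category.assoc, hg j,
      hP.fan_mk_lift_comp]
  calc pr i (r (dnf φ fun j => g j z)) = dnf φ fun j => pr i (r (g j z)) := by
        rw [map_dnf, map_dnf]; rfl
    _ = dnf φ ((fun t => f t z) ∘ M.left i) := congrArg _ (funext hcol)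
    _ = f (M.right i) z := hφ.dnf_comp_left _ i
    _ = pr i (hP.lift (Fan.mk Z fun i => f (M.right i)) z) := by
        rw [← ConcreteCategory.comp_apply, hP.fan_mk_lift_comp]

theorem hasClosedRels_iff_not_hasConflict {M : Matr} :
    M.HasClosedRels BoolAlg.{w} (MorphismProperty.monomorphisms _) ↔ ¬ M.HasConflict :=
  ⟨fun h hM => not_hasClosedRels_of_hasConflict hM h, fun hM =>
    (Matr.exists_isRealizedBy_of_not_hasConflict hM).elim fun _ hφ =>
      hasClosedRels_of_isRealizedBy hφ⟩

end BoolAlg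

/-- The opposite of the category of finite sets, with objects in `Type u` and morphisms in
`Type v`: a morphism `a ⟶ b` is a map `ULift (Fin b) → ULift (Fin a)`. -/
abbrev FinSetOp : Type u :=
  InducedCategory FintypeCat.Skeleton.{v}ᵒᵖ fun n : ULift.{u} ℕ => .op (.mk n.down)

namespace FinSetOp

abbrev of (n : ℕ) : FinSetOp.{v, u} := ULift.up n

abbrev toSkeletonOp : FinSetOp.{v, u} ⥤ FintypeCat.Skeleton.{v}ᵒᵖ := inducedFunctor _

instance : toSkeletonOp.{v, u}.EssSurj where
  mem_essImage X := ⟨⟨X.unop.len⟩, ⟨Iso.refl _⟩⟩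

instance : toSkeletonOp.{v, u}.IsEquivalence where

instance : HasFiniteLimits FinSetOp.{v, u} := by
  have : HasFiniteColimits FintypeCat.Skeleton.{v} :=
    ⟨fun _ _ _ => Adjunction.hasColimitsOfShape_of_equivalence FintypeCat.Skeleton.incl⟩
  exact ⟨fun _ _ _ => Adjunction.hasLimitsOfShape_of_equivalence toSkeletonOp⟩

lemma not_subsingleton_hom : ¬ Subsingleton (of.{v, u} 2 ⟶ of 2) := by
  rintro ⟨h⟩
  have := congrArg (fun f : of.{v, u} 2 ⟶ of 2 => f.hom.unop ⟨(1 : Fin 2)⟩)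
    (h (𝟙 _) ⟨Quiver.Hom.op fun _ => ⟨(0 : Fin 2)⟩⟩)
  exact absurd this (by decide)

lemma exists_apply_eq_of_jointly_mono {ι : Type*} {A : FinSetOp.{v, u}} {B : ι → FinSetOp.{v, u}}
    (g : ∀ i, A ⟶ B i) (hg : ∀ x y : of 2 ⟶ A, (∀ i, x ≫ g i = y ≫ g i) → x = y)
    (p : ULift (Fin A.down)) : ∃ i q, (g i).hom.unop q = p := by
  classical
  by_contra! hp
  let x : of 2 ⟶ A := ⟨Quiver.Hom.op fun _ => ⟨(0 : Fin 2)⟩⟩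
  let y : of 2 ⟶ A := ⟨Quiver.Hom.op fun q => if q = p then ⟨(1 : Fin 2)⟩ else ⟨(0 : Fin 2)⟩⟩
  have hxy := hg x y fun i => InducedCategory.hom_ext <| Quiver.Hom.unop_inj <| funext fun q =>
    (if_neg (hp i q)).symm
  have h01 : (⟨0⟩ : ULift.{v} (Fin 2)) = ⟨1⟩ :=
    (congrArg (fun h : of 2 ⟶ A => h.hom.unop p) hxy).trans (if_pos rfl)
  exact absurd h01 (by decide)

lemma surjective_of_mono {R P : FinSetOp.{v, u}} (r : R ⟶ P) [Mono r] :
    Function.Surjective r.hom.unop := fun p => by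
  obtain ⟨_, q, hq⟩ := exists_apply_eq_of_jointly_mono (fun _ : Unit => r)
    (fun x y h => (cancel_mono r).mp (h ⟨⟩)) p
  exact ⟨q, hq⟩

lemma exists_comp_eq_of_factorsThrough {R P Z : FinSetOp.{v, u}} (r : R ⟶ P)
    (hr : Function.Surjective r.hom.unop) (ψ : Z ⟶ P)
    (h : Function.FactorsThrough ψ.hom.unop r.hom.unop) : ∃ g : Z ⟶ R, g ≫ r = ψ :=
  ⟨⟨Quiver.Hom.op (ψ.hom.unop ∘ Function.surjInv hr)⟩, InducedCategory.hom_ext <|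
    Quiver.Hom.unop_inj <| funext fun _ => h (Function.surjInv_eq hr _)⟩

/-- In `FinSetOp`, factoring through `r` means being constant on the fibres of the surjection
underlying `r`. Two points of a fibre come from points `x, x'` of `X` in rows `i, i'` on which
all left columns agree; evaluating `φ` on the indicators `t ↦ [f t x = z]` and `t ↦ [f t x' = z]`,
where `z` is the right entry of row `i` at `x`, shows that the right entries agree too. -/
theorem isClosed_of_isRealizedBy {M : Matr} {φ : (Fin M.m → Bool) → Bool} (hφ : M.IsRealizedBy φ)
    {X P R : FinSetOp.{v, u}} (pr : Fin M.n → (P ⟶ X)) (hP : IsLimit (Fan.mk P pr)) (r : R ⟶ P)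
    [Mono r] : M.IsClosed pr hP r := by
  intro Z f hleft
  choose g hg using hleft
  refine exists_comp_eq_of_factorsThrough r (surjective_of_mono r) _ fun p p' hpp' => ?_
  have hcol (c : Fin M.n → (Z ⟶ X)) (i : Fin M.n) (x : ULift (Fin X.down)) :
      (hP.lift (Fan.mk Z c)).hom.unop ((pr i).hom.unop x) = (c i).hom.unop x :=
    congrArg (fun h : Z ⟶ X => h.hom.unop x) (hP.fan_mk_lift_comp c i)
  have hpr := exists_apply_eq_of_jointly_mono pr fun x y h => Fan.IsLimit.hom_ext hP x y h
  obtain ⟨i, x, rfl⟩ := hpr p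
  obtain ⟨i', x', rfl⟩ := hpr p'
  refine (hcol _ i x).trans (Eq.trans ?_ (hcol _ i' x').symm)
  have hleft_eq (j : Fin M.m) : (f (M.left i j)).hom.unop x = (f (M.left i' j)).hom.unop x' := by
    refine (hcol (fun i => f (M.left i j)) i x).symm.trans
      (Eq.trans ?_ (hcol (fun i => f (M.left i j)) i' x'))
    rw [← hg j]
    exact congrArg (g j).hom.unop hpp'
  let b (y : ULift (Fin X.down)) (t : Fin M.k) : Bool :=
    decide ((f t).hom.unop y = (f (M.right i)).hom.unop x)
  have hb : b x ∘ M.left i = b x' ∘ M.left i' := funext fun j => by simp [b, hleft_eq j]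
  have := (hφ i' (b x')).symm.trans ((congrArg φ hb).symm.trans (hφ i (b x)))
  simp only [b, decide_true, decide_eq_true_eq] at this
  exact this.symm

end FinSetOp

/-- For a set `S` of non-pointed matrices, every finitely
complete category with `S`-closed relations is a preorder (at most one
morphism between any two objects) if and only if the category `BoolAlg` of
Boolean algebras does not have `S`-closed relations. -/
theorem trivial_iff_not_BoolAlg (S : Set Matr) :
    (∀ (C : Type u) [Category.{v} C] [HasFiniteLimits C],
        Matr.HasSClosedRels S C (MorphismProperty.monomorphisms C) →
        ∀ X Y : C, Subsingleton (X ⟶ Y)) ↔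
    ¬ Matr.HasSClosedRels S BoolAlg.{w}
        (MorphismProperty.monomorphisms BoolAlg.{w}) := by
  constructor
  · intro htrivial hBoolAlg
    refine FinSetOp.not_subsingleton_hom (htrivial FinSetOp.{v, u} (fun M hM => ?_) _ _)
    obtain ⟨φ, hφ⟩ := Matr.exists_isRealizedBy_of_not_hasConflict
      (BoolAlg.hasClosedRels_iff_not_hasConflict.mp (hBoolAlg M hM))
    exact fun _ _ _ pr hP r (_ : Mono r) => FinSetOp.isClosed_of_isRealizedBy hφ pr hP r
  · intro hBoolAlg C _ _ hS
    obtain ⟨M, hM, hMBoolAlg⟩ := not_forall₂.mp hBoolAlg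
    exact Matr.subsingleton_hom_of_hasConflict
      (not_not.mp (mt BoolAlg.hasClosedRels_iff_not_hasConflict.mpr hMBoolAlg)) (hS M hM)
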